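/- Let C be a permutation-invariant partition of the player set of a finite normal-form game with identical interests, and let q^c : [0,∞) → Δ^n be a solution of the joint CT-ECFP differential inclusion q̇ ∈ BR(q̄) − q. Then the function v(t) = (1/n) ∑_{i=1}^n U(q^c_i(t), q̄^c_{-i}(t)) is nondecreasing in t, where q̄^c(t) is the centroid distribution of q^c(t). -/

import Mathlib

/-!
Since the centroid profile `p̄` is constant on classes, permutation invariance gives
`U(σ, p̄₋ᵢ) = U(σ, p̄₋ⱼ)` for players `i, j` of one class, and `U` is linear in each player's
strategy; averaging over a class therefore turns `U(p̄ᵢ, p̄₋ᵢ)` into the class average of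
`U(pⱼ, p̄₋ⱼ)`, whence `V(p) = U(p̄)`. Along a solution, `t ↦ U(q̄(t))` is absolutely continuous
(a polynomial in the absolutely continuous coordinates of `q̄`) with derivative
`∑ᵢ U(b̄ᵢ - q̄ᵢ, q̄₋ᵢ)` a.e., where `b ∈ BR(q̄)`. The same averaging writes `U(b̄ᵢ, q̄₋ᵢ)` as the
class average of `U(bⱼ, q̄₋ⱼ) ≥ U(q̄)`, so the derivative is nonnegative.
-/

open MeasureTheory Filter Topology

noncomputable section

namespace ECFP

variable {ι A κ : Type*}

/-- The mixed-strategy simplex over a finite action set `Y` inside the action universe `A`. -/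
def simplex (Y : Finset A) : Set (A → ℝ) :=
  {p | (∀ a, 0 ≤ p a) ∧ (∀ a, a ∉ Y → p a = 0) ∧ ∑ a ∈ Y, p a = 1}

/-- The space `Δⁿ` of joint mixed strategies. -/
def Delta (Y : ι → Finset A) : Set (ι → A → ℝ) :=
  {p | ∀ i, p i ∈ simplex (Y i)}

variable [Fintype ι] [DecidableEq ι] [Fintype A] [DecidableEq κ]

/-- The mixed extension of the common utility `u`:
`U(p₁,…,pₙ) = ∑_y u(y) p₁(y₁)⋯pₙ(yₙ)`. -/
def U (u : (ι → A) → ℝ) (p : ι → A → ℝ) : ℝ :=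
  ∑ y : ι → A, u y * ∏ i, p i (y i)

/-- The `ε`-best-response set of player `i` against the joint strategy `p`
(only the components `p_{-i}` matter, since player `i`'s component is overwritten):
`{pᵢ ∈ Δᵢ : U(pᵢ,p_{-i}) ≥ U(qᵢ,p_{-i}) - ε  ∀ qᵢ ∈ Δᵢ}`. -/
def BRi (Y : ι → Finset A) (u : (ι → A) → ℝ) (ε : ℝ) (p : ι → A → ℝ) (i : ι) :
    Set (A → ℝ) :=
  {pi | pi ∈ simplex (Y i) ∧
    ∀ qi ∈ simplex (Y i),
      U u (Function.update p i pi) ≥ U u (Function.update p i qi) - ε}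

/-- The joint `ε`-best-response set `BR^ε(p) = (BR₁^ε(p_{-1}),…,BRₙ^ε(p_{-n}))`. -/
def BR (Y : ι → Finset A) (u : (ι → A) → ℝ) (ε : ℝ) (p : ι → A → ℝ) :
    Set (ι → A → ℝ) :=
  {b | ∀ i, b i ∈ BRi Y u ε p i}

/-- The profile obtained from `y` by swapping the strategies of players `i` and `j`. -/
def swapStrat (y : ι → A) (i j : ι) : ι → A :=
  Function.update (Function.update y i (y j)) j (y i)

/-- `cls : ι → κ` encodes a permutation-invariant partition of the player set (the classes
are the fibers of `cls`): players in the same class have the same action set, and the utility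
is invariant under swapping the strategies of two same-class players in any strategy profile. -/
def PermInvariant (Y : ι → Finset A) (u : (ι → A) → ℝ) (cls : ι → κ) : Prop :=
  ∀ i j : ι, cls i = cls j →
    Y i = Y j ∧ ∀ y : ι → A, (∀ k, y k ∈ Y k) → u (swapStrat y i j) = u y

/-- The equivalence class (as a finset of players) of player `i`. -/
def cluster (cls : ι → κ) (i : ι) : Finset ι :=
  Finset.univ.filter (fun j => cls j = cls i)

/-- The centroid distribution `p̄`: player `i` is assigned the average of the strategies of
the players in `i`'s class. -/
def centroid (cls : ι → κ) (p : ι → A → ℝ) : ι → A → ℝ :=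
  fun i => ((cluster cls i).card : ℝ)⁻¹ • ∑ j ∈ cluster cls i, p j

/-- A joint strategy is class-constant if same-class players use identical strategies. -/
def classConst (cls : ι → κ) (p : ι → A → ℝ) : Prop :=
  ∀ i j, cls i = cls j → p i = p j

/-- The set of Nash equilibria. -/
def NE (Y : ι → Finset A) (u : (ι → A) → ℝ) : Set (ι → A → ℝ) :=
  {p | p ∈ Delta Y ∧ ∀ i, ∀ qi ∈ simplex (Y i),
    U u (Function.update p i qi) ≤ U u p}

/-- The set of symmetric Nash equilibria relative to the partition `cls`. -/
def SNE (Y : ι → Finset A) (u : (ι → A) → ℝ) (cls : ι → κ) : Set (ι → A → ℝ) :=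
  {p | p ∈ NE Y u ∧ classConst cls p}

/-- The set of mean-centric equilibria relative to the partition `cls`:
`U(pᵢ, p̄_{-i}) ≥ U(pᵢ', p̄_{-i})` for all `pᵢ' ∈ Δᵢ` and all `i`. -/
def MCE (Y : ι → Finset A) (u : (ι → A) → ℝ) (cls : ι → κ) : Set (ι → A → ℝ) :=
  {p | p ∈ Delta Y ∧ ∀ i, ∀ qi ∈ simplex (Y i),
    U u (Function.update (centroid cls p) i qi)
      ≤ U u (Function.update (centroid cls p) i (p i))}

/-- `V(p) = (1/n) ∑ᵢ U(pᵢ, p̄_{-i})`. -/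
def Vfun (u : (ι → A) → ℝ) (cls : ι → κ) (p : ι → A → ℝ) : ℝ :=
  (Fintype.card ι : ℝ)⁻¹ * ∑ i, U u (Function.update (centroid cls p) i (p i))

/-- A discrete-time ECFP process w.r.t. `(Γ, 𝒞)`: `q(1) = a(1)`,
`q(t+1) = q(t) + γₜ (a(t+1) − q(t))` and `a(t+1) ∈ BR^{εₜ}(q̄(t))` for all `t`
(time is indexed by `ℕ`, i.e. `t = 0` plays the role of `t = 1` in the paper). -/
structure IsECFP (Y : ι → Finset A) (u : (ι → A) → ℝ) (cls : ι → κ)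
    (γ ε : ℕ → ℝ) (a q : ℕ → ι → A → ℝ) : Prop where
  a_init_mem : a 0 ∈ Delta Y
  q_mem : ∀ t, q t ∈ Delta Y
  init : q 0 = a 0
  step : ∀ t, q (t + 1) = q t + γ t • (a (t + 1) - q t)
  br : ∀ t, a (t + 1) ∈ BR Y u (ε t) (centroid cls (q t))

/-- A solution of the differential inclusion `ẋ ∈ F(x)` taking values in `Δⁿ`:
an everywhere-`Δⁿ`-valued trajectory on `[0,∞)` which is the integral of a locally
integrable selection `g(t) ∈ F(x(t))` (a.e.). -/
def IsSolution (Y : ι → Finset A) (F : (ι → A → ℝ) → Set (ι → A → ℝ))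
    (x : ℝ → ι → A → ℝ) : Prop :=
  (∀ t : ℝ, 0 ≤ t → x t ∈ Delta Y) ∧
  ∃ g : ℝ → ι → A → ℝ,
    LocallyIntegrableOn g (Set.Ici (0 : ℝ)) ∧
    (∀ᵐ t ∂(volume.restrict (Set.Ici (0 : ℝ))), g t ∈ F (x t)) ∧
    ∀ t : ℝ, 0 ≤ t → x t = x 0 + ∫ s in Set.Ioc (0 : ℝ) t, g s

/-- Right-hand side of the joint CT-ECFP differential inclusion `q̇ ∈ BR(q̄) − q`. -/
def Fjoint (Y : ι → Finset A) (u : (ι → A) → ℝ) (cls : ι → κ)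
    (q : ι → A → ℝ) : Set (ι → A → ℝ) :=
  (fun b => b - q) '' BR Y u 0 (centroid cls q)

/-- Right-hand side of the centroid CT-ECFP differential inclusion `ẏ ∈ BR(y) − y`. -/
def Fcent (Y : ι → Finset A) (u : (ι → A) → ℝ)
    (y : ι → A → ℝ) : Set (ι → A → ℝ) :=
  (fun b => b - y) '' BR Y u 0 y

/-- The ω-limit set of a continuous-time trajectory: all limits of sequences
`x(t_k)` with `t_k → ∞`. -/
def omegaLimitSet (x : ℝ → ι → A → ℝ) : Set (ι → A → ℝ) :=
  {p | ∃ tk : ℕ → ℝ, Tendsto tk atTop atTop ∧ Tendsto (fun k => x (tk k)) atTop (𝓝 p)}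

/-- The set of limit points of a (discrete-time) sequence. -/
def seqLimitPoints (q : ℕ → ι → A → ℝ) : Set (ι → A → ℝ) :=
  {p | ∃ φ : ℕ → ℕ, StrictMono φ ∧ Tendsto (fun k => q (φ k)) atTop (𝓝 p)}

/-- A compact set `X ⊆ Δⁿ` is internally chain transitive for the inclusion `ẋ ∈ F(x)`:
any two points of `X` can be joined, for every `ε > 0` and `T > 0`, by finitely many
solution pieces of duration `> T` staying in `X`, with jumps of size `≤ ε`. -/
def InternallyChainTransitive (Y : ι → Finset A)
    (F : (ι → A → ℝ) → Set (ι → A → ℝ)) (X : Set (ι → A → ℝ)) : Prop :=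
  IsCompact X ∧ X ⊆ Delta Y ∧
  ∀ ξ ∈ X, ∀ η ∈ X, ∀ ε : ℝ, 0 < ε → ∀ T : ℝ, 0 < T →
    ∃ k : ℕ, 0 < k ∧ ∃ x : ℕ → ℝ → ι → A → ℝ, ∃ tt : ℕ → ℝ,
      (∀ i < k, IsSolution Y F (x i)) ∧
      (∀ i < k, T < tt i) ∧
      (∀ i < k, ∀ s : ℝ, 0 ≤ s → s ≤ tt i → x i s ∈ X) ∧
      (∀ i, i + 1 < k → ‖x i (tt i) - x (i + 1) 0‖ ≤ ε) ∧
      ‖x 0 0 - ξ‖ ≤ ε ∧ ‖x (k - 1) (tt (k - 1)) - η‖ ≤ ε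

open Finset Function

theorem _root_.AbsolutelyContinuousOnInterval.const {X : Type*} [PseudoMetricSpace X]
    (c : X) (a b : ℝ) : AbsolutelyContinuousOnInterval (fun _ : ℝ => c) a b := by
  simpa [AbsolutelyContinuousOnInterval] using tendsto_const_nhds

theorem _root_.AbsolutelyContinuousOnInterval.finsetSum {β F : Type*} [SeminormedAddCommGroup F]
    {s : Finset β} {f : β → ℝ → F} {a b : ℝ}
    (hf : ∀ i ∈ s, AbsolutelyContinuousOnInterval (f i) a b) :
    AbsolutelyContinuousOnInterval (fun x => ∑ i ∈ s, f i x) a b := by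
  classical
  induction s using Finset.induction_on with
  | empty => simpa using AbsolutelyContinuousOnInterval.const (0 : F) a b
  | insert i s hi ih =>
    simp only [sum_insert hi]
    exact (hf i (mem_insert_self i s)).fun_add (ih fun j hj => hf j (mem_insert_of_mem hj))

theorem _root_.AbsolutelyContinuousOnInterval.finsetProd {β : Type*}
    {s : Finset β} {f : β → ℝ → ℝ} {a b : ℝ}
    (hf : ∀ i ∈ s, AbsolutelyContinuousOnInterval (f i) a b) :
    AbsolutelyContinuousOnInterval (fun x => ∏ i ∈ s, f i x) a b := by
  classical
  induction s using Finset.induction_on with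
  | empty => simpa using AbsolutelyContinuousOnInterval.const (1 : ℝ) a b
  | insert i s hi ih =>
    simp only [prod_insert hi]
    exact (hf i (mem_insert_self i s)).fun_mul (ih fun j hj => hf j (mem_insert_of_mem hj))

theorem _root_.AbsolutelyContinuousOnInterval.le_of_ae_hasDerivAt_nonneg {f f' : ℝ → ℝ}
    {a b : ℝ} (hab : a ≤ b) (hf : AbsolutelyContinuousOnInterval f a b)
    (hf' : ∀ᵐ x, x ∈ Set.Icc a b → HasDerivAt f (f' x) x ∧ 0 ≤ f' x) :
    f a ≤ f b := by
  rw [← sub_nonneg, ← hf.integral_deriv_eq_sub]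
  refine intervalIntegral.integral_nonneg_of_ae_restrict hab ?_
  filter_upwards [(ae_restrict_iff' measurableSet_Icc).2 hf'] with x ⟨hderiv, hnonneg⟩
  exact hderiv.deriv ▸ hnonneg

theorem _root_.MeasureTheory.LocallyIntegrableOn.integrableOn_Ioc {E : Type*}
    [NormedAddCommGroup E] {f : ℝ → E} {a : ℝ} (hf : LocallyIntegrableOn f (Set.Ici a))
    (b : ℝ) : IntegrableOn f (Set.Ioc a b) :=
  (hf.integrableOn_compact_subset Set.Icc_subset_Ici_self isCompact_Icc).mono_set
    Set.Ioc_subset_Icc_self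

section Game

variable {Y : ι → Finset A} {u : (ι → A) → ℝ} {cls : ι → κ}

omit [DecidableEq ι] in
lemma mem_cluster {i j : ι} : j ∈ cluster cls i ↔ cls j = cls i := by
  simp [cluster]

omit [DecidableEq ι] in
lemma cluster_congr {i j : ι} (h : cls i = cls j) : cluster cls i = cluster cls j := by
  simp only [cluster, h]

omit [DecidableEq ι] in
lemma card_cluster_pos (cls : ι → κ) (i : ι) : 0 < ((cluster cls i).card : ℝ) :=
  Nat.cast_pos.2 (card_pos.2 ⟨i, mem_cluster.2 rfl⟩)

omit [DecidableEq ι] in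
lemma sum_inv_card_cluster_mul_sum (cls : ι → κ) (f : ι → ℝ) :
    ∑ i, ((cluster cls i).card : ℝ)⁻¹ * ∑ j ∈ cluster cls i, f j = ∑ j, f j := by
  calc ∑ i, ((cluster cls i).card : ℝ)⁻¹ * ∑ j ∈ cluster cls i, f j
      = ∑ i, ∑ j ∈ cluster cls i, ((cluster cls j).card : ℝ)⁻¹ * f j := by
        refine sum_congr rfl fun i _ => ?_
        rw [mul_sum]
        exact sum_congr rfl fun j hj => by rw [cluster_congr (mem_cluster.1 hj)]
    _ = ∑ j, ∑ i ∈ cluster cls j, ((cluster cls j).card : ℝ)⁻¹ * f j :=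
        sum_comm' fun i j => by simp [mem_cluster, eq_comm]
    _ = ∑ j, f j := by
        refine sum_congr rfl fun j _ => ?_
        rw [sum_const, nsmul_eq_mul, ← mul_assoc, mul_inv_cancel₀ (card_cluster_pos cls j).ne',
          one_mul]

omit [DecidableEq ι] [Fintype A] in
lemma centroid_apply (cls : ι → κ) (p : ι → A → ℝ) (i : ι) (a : A) :
    centroid cls p i a = ((cluster cls i).card : ℝ)⁻¹ * ∑ j ∈ cluster cls i, p j a := by
  simp [centroid, Finset.sum_apply]

omit [DecidableEq ι] [Fintype A] in
lemma centroid_classConst (cls : ι → κ) (p : ι → A → ℝ) : classConst cls (centroid cls p) :=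
  fun i j h => by simp only [centroid, cluster_congr h]

omit [DecidableEq ι] [Fintype A] in
lemma centroid_sub (cls : ι → κ) (p q : ι → A → ℝ) (i : ι) :
    centroid cls (p - q) i = centroid cls p i - centroid cls q i := by
  funext a
  simp [centroid_apply, sum_sub_distrib, mul_sub]

omit [Fintype A] in
lemma centroid_mem_Delta (hpi : PermInvariant Y u cls) {p : ι → A → ℝ} (hp : p ∈ Delta Y) :
    centroid cls p ∈ Delta Y := by
  intro i
  have hY : ∀ j ∈ cluster cls i, p j ∈ simplex (Y i) :=
    fun j hj => (hpi j i (mem_cluster.1 hj)).1 ▸ hp j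
  refine ⟨fun a => ?_, fun a ha => ?_, ?_⟩
  · rw [centroid_apply]
    exact mul_nonneg (inv_nonneg.2 (card_cluster_pos cls i).le)
      (sum_nonneg fun j hj => (hY j hj).1 a)
  · rw [centroid_apply, sum_eq_zero fun j hj => (hY j hj).2.1 a ha, mul_zero]
  · simp only [centroid_apply, ← mul_sum]
    rw [sum_comm, sum_congr rfl fun j hj => (hY j hj).2.2, sum_const, nsmul_one,
      inv_mul_cancel₀ (card_cluster_pos cls i).ne']

def centroidCoord (cls : ι → κ) (i : ι) (a : A) : (ι → A → ℝ) →L[ℝ] ℝ :=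
  ((cluster cls i).card : ℝ)⁻¹ • ∑ j ∈ cluster cls i,
    (ContinuousLinearMap.proj a).comp (ContinuousLinearMap.proj j)

omit [DecidableEq ι] [Fintype A] in
lemma centroidCoord_apply (cls : ι → κ) (i : ι) (a : A) (p : ι → A → ℝ) :
    centroidCoord cls i a p = centroid cls p i a := by
  simp [centroidCoord, centroid_apply]

lemma U_update_eq (u : (ι → A) → ℝ) (P : ι → A → ℝ) (i : ι) (σ : A → ℝ) :
    U u (update P i σ) = ∑ y : ι → A, (u y * ∏ k ∈ univ.erase i, P k (y k)) * σ (y i) := by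
  refine sum_congr rfl fun y _ => ?_
  rw [← mul_prod_erase univ _ (mem_univ i), update_self,
    prod_congr rfl fun k hk => by rw [update_of_ne (ne_of_mem_erase hk)]]
  ring

lemma U_update_sum {β : Type*} (u : (ι → A) → ℝ) (P : ι → A → ℝ) (i : ι)
    (s : Finset β) (σ : β → A → ℝ) :
    U u (update P i (∑ j ∈ s, σ j)) = ∑ j ∈ s, U u (update P i (σ j)) := by
  simp only [U_update_eq, Finset.sum_apply, mul_sum]
  exact sum_comm

lemma U_update_smul (u : (ι → A) → ℝ) (P : ι → A → ℝ) (i : ι) (c : ℝ) (σ : A → ℝ) :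
    U u (update P i (c • σ)) = c * U u (update P i σ) := by
  simp only [U_update_eq, Pi.smul_apply, smul_eq_mul, mul_sum]
  exact sum_congr rfl fun y _ => by ring

lemma U_update_sub (u : (ι → A) → ℝ) (P : ι → A → ℝ) (i : ι) (σ τ : A → ℝ) :
    U u (update P i (σ - τ)) = U u (update P i σ) - U u (update P i τ) := by
  simp only [U_update_eq, Pi.sub_apply, ← sum_sub_distrib]
  exact sum_congr rfl fun y _ => by ring

omit [Fintype ι] [Fintype A] in
lemma update_mem_Delta {P : ι → A → ℝ} (hP : P ∈ Delta Y) {i : ι} {σ : A → ℝ}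
    (hσ : σ ∈ simplex (Y i)) : update P i σ ∈ Delta Y := by
  intro k
  rcases eq_or_ne k i with rfl | hk
  · rwa [update_self]
  · rw [update_of_ne hk]
    exact hP k

omit [DecidableEq ι] [Fintype A] in
lemma prod_eq_zero_of_mem_Delta {P : ι → A → ℝ} (hP : P ∈ Delta Y) {y : ι → A}
    (hy : ¬∀ k, y k ∈ Y k) : ∏ k, P k (y k) = 0 := by
  push Not at hy
  obtain ⟨k, hk⟩ := hy
  exact prod_eq_zero (mem_univ k) ((hP k).2.1 _ hk)

omit [Fintype ι] [Fintype A] in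
lemma swapStrat_eq_comp_swap (y : ι → A) (i j : ι) :
    swapStrat y i j = y ∘ Equiv.swap i j := by
  funext k
  simp only [swapStrat, update_apply, comp_apply, Equiv.swap_apply_def]
  split_ifs <;> simp_all

omit [DecidableEq κ] in
lemma U_update_swap (hpi : PermInvariant Y u cls) {i j : ι} (hij : cls i = cls j)
    {P : ι → A → ℝ} (hP : P ∈ Delta Y) (hPij : P i = P j) {σ : A → ℝ}
    (hσ : σ ∈ simplex (Y i)) :
    U u (update P i σ) = U u (update P j σ) := by
  have hcomp : ∀ k, update P j σ k = update P i σ (Equiv.swap i j k) := by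
    intro k
    simp only [update_apply, Equiv.swap_apply_def]
    split_ifs <;> simp_all
  have hprod : ∀ y : ι → A,
      ∏ k, update P j σ k (y (Equiv.swap i j k)) = ∏ k, update P i σ k (y k) := fun y =>
    (Fintype.prod_equiv (Equiv.swap i j) _ _ fun k => by rw [hcomp, Equiv.swap_apply_self]).symm
  let e : Equiv.Perm (ι → A) := Involutive.toPerm (· ∘ Equiv.swap i j) fun y => by ext; simp
  refine Fintype.sum_equiv e _ _ fun y => ?_
  change _ = u (y ∘ Equiv.swap i j) * ∏ k, update P j σ k (y (Equiv.swap i j k))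
  rw [hprod]
  -- `u` is swap-invariant only on `∏ₖ Yₖ`, but outside it the profile has weight zero.
  by_cases hy : ∀ k, y k ∈ Y k
  · rw [← swapStrat_eq_comp_swap, (hpi i j hij).2 y hy]
  · rw [prod_eq_zero_of_mem_Delta (update_mem_Delta hP hσ) hy, mul_zero, mul_zero]

lemma U_update_centroid (hpi : PermInvariant Y u cls) {P : ι → A → ℝ} (hP : P ∈ Delta Y)
    (hPc : classConst cls P) {σ : ι → A → ℝ} (hσ : σ ∈ Delta Y) (i : ι) :
    U u (update P i (centroid cls σ i))
      = ((cluster cls i).card : ℝ)⁻¹ * ∑ j ∈ cluster cls i, U u (update P j (σ j)) := by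
  rw [centroid, U_update_smul, U_update_sum]
  congr 1
  refine sum_congr rfl fun j hj => ?_
  have hij : cls i = cls j := (mem_cluster.1 hj).symm
  exact U_update_swap hpi hij hP (hPc i j hij) ((hpi i j hij).1 ▸ hσ j)

lemma Vfun_eq_U_centroid [Nonempty ι] (hpi : PermInvariant Y u cls) {p : ι → A → ℝ}
    (hp : p ∈ Delta Y) : Vfun u cls p = U u (centroid cls p) := by
  have hclass : ∀ i, ((cluster cls i).card : ℝ)⁻¹
      * ∑ j ∈ cluster cls i, U u (update (centroid cls p) j (p j)) = U u (centroid cls p) :=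
    fun i => by
      rw [← U_update_centroid hpi (centroid_mem_Delta hpi hp) (centroid_classConst cls p) hp,
        update_eq_self]
  rw [Vfun, ← sum_inv_card_cluster_mul_sum cls]
  simp only [hclass, sum_const, card_univ, nsmul_eq_mul]
  rw [← mul_assoc, inv_mul_cancel₀ (Nat.cast_ne_zero.2 Fintype.card_ne_zero), one_mul]

lemma U_centroid_le_update_of_mem_BR (hpi : PermInvariant Y u cls) {p b : ι → A → ℝ}
    (hp : p ∈ Delta Y) (hb : b ∈ BR Y u 0 (centroid cls p)) (i : ι) :
    U u (centroid cls p) ≤ U u (update (centroid cls p) i (centroid cls b i)) := by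
  have hP := centroid_mem_Delta hpi hp
  have hbr : ∀ j, U u (centroid cls p) ≤ U u (update (centroid cls p) j (b j)) := fun j => by
    simpa only [update_eq_self, sub_zero] using (hb j).2 _ (hP j)
  rw [U_update_centroid hpi hP (centroid_classConst cls p) (σ := b) (fun j => (hb j).1),
    le_inv_mul_iff₀ (card_cluster_pos cls i)]
  calc ((cluster cls i).card : ℝ) * U u (centroid cls p)
      = ∑ _j ∈ cluster cls i, U u (centroid cls p) := by rw [sum_const, nsmul_eq_mul]
    _ ≤ _ := sum_le_sum fun j _ => hbr j

lemma sum_U_update_centroid_sub_nonneg (hpi : PermInvariant Y u cls) {p b : ι → A → ℝ}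
    (hp : p ∈ Delta Y) (hb : b ∈ BR Y u 0 (centroid cls p)) :
    0 ≤ ∑ i, U u (update (centroid cls p) i (centroid cls (b - p) i)) :=
  sum_nonneg fun i _ => by
    rw [centroid_sub, U_update_sub, update_eq_self]
    exact sub_nonneg.2 (U_centroid_le_update_of_mem_BR hpi hp hb i)

lemma hasDerivAt_U_comp (u : (ι → A) → ℝ) {ψ : ι → A → ℝ → ℝ} {ψ' : ι → A → ℝ} {r : ℝ}
    (hψ : ∀ i a, HasDerivAt (ψ i a) (ψ' i a) r) :
    HasDerivAt (fun t => U u fun i a => ψ i a t)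
      (∑ i, U u (update (fun i a => ψ i a r) i (ψ' i))) r := by
  have hprod : ∀ y : ι → A, HasDerivAt (fun t => ∏ i, ψ i (y i) t)
      (∑ i, (∏ k ∈ univ.erase i, ψ k (y k) r) * ψ' i (y i)) r := fun y => by
    simpa only [smul_eq_mul] using HasDerivAt.fun_finsetProd fun i _ => hψ i (y i)
  refine (HasDerivAt.fun_sum (u := univ) fun y _ => (hprod y).const_mul (u y)).congr_deriv ?_
  simp only [U_update_eq, mul_sum]
  rw [sum_comm]
  exact sum_congr rfl fun y _ => sum_congr rfl fun i _ => by ring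

lemma absolutelyContinuousOnInterval_U_comp (u : (ι → A) → ℝ) {ψ : ι → A → ℝ → ℝ} {s t : ℝ}
    (hψ : ∀ i a, AbsolutelyContinuousOnInterval (ψ i a) s t) :
    AbsolutelyContinuousOnInterval (fun r => U u fun i a => ψ i a r) s t :=
  .finsetSum fun y _ =>
    (AbsolutelyContinuousOnInterval.finsetProd fun i _ => hψ i (y i)).const_mul (u y)

omit [DecidableEq ι] in
lemma centroid_apply_eq_add_intervalIntegral {x g : ℝ → ι → A → ℝ}
    (hg : LocallyIntegrableOn g (Set.Ici 0))
    (hxg : ∀ t, 0 ≤ t → x t = x 0 + ∫ s in Set.Ioc 0 t, g s) {r : ℝ} (hr : 0 ≤ r)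
    (i : ι) (a : A) :
    centroid cls (x r) i a = centroid cls (x 0) i a + ∫ τ in 0..r, centroid cls (g τ) i a := by
  simp only [← centroidCoord_apply]
  rw [hxg r hr, map_add, intervalIntegral.integral_of_le hr,
    (centroidCoord cls i a).integral_comp_comm (hg.integrableOn_Ioc r)]

lemma U_centroid_le_of_isSolution (hpi : PermInvariant Y u cls) {x : ℝ → ι → A → ℝ}
    (hx : IsSolution Y (Fjoint Y u cls) x) {s t : ℝ} (hs : 0 ≤ s) (hst : s ≤ t) :
    U u (centroid cls (x s)) ≤ U u (centroid cls (x t)) := by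
  obtain ⟨hΔ, g, hg, hgF, hxg⟩ := hx
  set ψ : ι → A → ℝ → ℝ := fun i a r =>
    centroid cls (x 0) i a + ∫ τ in 0..r, centroid cls (g τ) i a
  have hψ : ∀ r, 0 ≤ r → (fun i a => ψ i a r) = centroid cls (x r) := fun r hr => by
    ext i a
    exact (centroid_apply_eq_add_intervalIntegral (cls := cls) hg hxg hr i a).symm
  have hsub : Set.Icc s t ⊆ Set.uIcc 0 t := by
    rw [Set.uIcc_of_le (hs.trans hst)]
    exact Set.Icc_subset_Icc_left hs
  have hint : ∀ i a, IntervalIntegrable (fun τ => centroid cls (g τ) i a) volume 0 t := by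
    intro i a
    simp only [← centroidCoord_apply]
    exact (intervalIntegrable_iff_integrableOn_Ioc_of_le (hs.trans hst)).2
      ((centroidCoord cls i a).integrable_comp (hg.integrableOn_Ioc t))
  have hac : ∀ i a, AbsolutelyContinuousOnInterval (ψ i a) s t := fun i a =>
    ((AbsolutelyContinuousOnInterval.const _ 0 t).fun_add
      ((hint i a).absolutelyContinuousOnInterval_intervalIntegral Set.left_mem_uIcc)).mono
      (by rwa [Set.uIcc_of_le hst])
  have hderiv : ∀ᵐ r, r ∈ Set.Icc s t → ∀ i a,
      HasDerivAt (ψ i a) (centroid cls (g r) i a) r := by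
    filter_upwards [ae_all_iff.2 fun i => ae_all_iff.2 fun a =>
      (hint i a).ae_hasDerivAt_integral] with r hr hrI i a
    exact (hr i a (hsub hrI) 0 Set.left_mem_uIcc).const_add _
  have hsel : ∀ᵐ r, r ∈ Set.Icc s t → g r ∈ Fjoint Y u cls (x r) := by
    filter_upwards [(ae_restrict_iff' measurableSet_Ici).1 hgF] with r hr hrI
    exact hr (hs.trans hrI.1)
  rw [← hψ s hs, ← hψ t (hs.trans hst)]
  refine (absolutelyContinuousOnInterval_U_comp u hac).le_of_ae_hasDerivAt_nonneg hst
    (f' := fun r => ∑ i, U u (update (fun i a => ψ i a r) i (centroid cls (g r) i))) ?_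
  filter_upwards [hderiv, hsel] with r hr_deriv hr_sel hrI
  obtain ⟨b, hb, hbg⟩ := hr_sel hrI
  refine ⟨hasDerivAt_U_comp u (hr_deriv hrI), ?_⟩
  have hr0 : 0 ≤ r := hs.trans hrI.1
  rw [hψ r hr0, ← hbg]
  exact sum_U_update_centroid_sub_nonneg hpi (hΔ r hr0) hb

end Game

variable [Nonempty ι]

theorem V_nondecreasing_along_solution_general
    (Y : ι → Finset A) (u : (ι → A) → ℝ)
    (cls : ι → κ) (hpi : PermInvariant Y u cls)
    (x : ℝ → ι → A → ℝ) (hx : IsSolution Y (Fjoint Y u cls) x) :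
    ∀ s t : ℝ, 0 ≤ s → s ≤ t → Vfun u cls (x s) ≤ Vfun u cls (x t) := by
  intro s t hs hst
  rw [Vfun_eq_U_centroid hpi (hx.1 s hs), Vfun_eq_U_centroid hpi (hx.1 t (hs.trans hst))]
  exact U_centroid_le_of_isSolution hpi hx hs hst

/-- Along any solution of the joint CT-ECFP inclusion `q̇ ∈ BR(q̄) − q`, the function
`v(t) = (1/n) ∑ᵢ U(q^c_i(t), q̄^c_{-i}(t))` is nondecreasing. -/
theorem V_nondecreasing_along_solution
    (Y : ι → Finset A) (hY : ∀ i, (Y i).Nonempty) (u : (ι → A) → ℝ)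
    (cls : ι → κ) (hpi : PermInvariant Y u cls)
    (x : ℝ → ι → A → ℝ) (hx : IsSolution Y (Fjoint Y u cls) x) :
    ∀ s t : ℝ, 0 ≤ s → s ≤ t → Vfun u cls (x s) ≤ Vfun u cls (x t) :=
  V_nondecreasing_along_solution_general Y u cls hpi x hx

end ECFP
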